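/- arXiv:1402.2471 — 2 statements merged into one kernel-verified Lean document; each statement's English description precedes it below -/
import Mathlib

section
/- For every n ≥ t ≥ 1, every K_{1,t}-saturated n-by-n bipartite graph contains at least (t-1)n - ⌊((t-1)/2)^2⌋ edges. -/
/-!
Let `k = t - 1`. In a `K_{1,t}`-saturated graph every degree is at most `k`, and every non-edge
has an endpoint of degree exactly `k`; hence the left vertices `X` and right vertices `Y` of
degree different from `k` span a complete bipartite graph. Counting the edges at the left
vertices, `|E| ≥ (n - |X|) k + |X| |Y|`, and symmetrically at the right. If `|X| ≤ |Y|` the first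
bound is at least `kn - |X| (k - |X|) ≥ kn - ⌊k² / 4⌋`.
-/

open Finset

/-- The bipartite graph (with parts indexed by `Fin n`) whose edge set is `E`
contains a complete bipartite graph with `a` vertices on the left and `b` on the right. -/
def containsK {n : ℕ} (E : Finset (Fin n × Fin n)) (a b : ℕ) : Prop :=
  ∃ S T : Finset (Fin n), S.card = a ∧ T.card = b ∧ ∀ u ∈ S, ∀ v ∈ T, (u, v) ∈ E

/-- `E` is (unordered) `K_{s,t}`-saturated: no copy of `K_{s,t}` in either orientation,
and adding any missing edge creates one. -/
def Saturated {n : ℕ} (s t : ℕ) (E : Finset (Fin n × Fin n)) : Prop :=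
  ¬ (containsK E s t ∨ containsK E t s) ∧
    ∀ u v : Fin n, (u, v) ∉ E →
      (containsK (insert (u, v) E) s t ∨ containsK (insert (u, v) E) t s)

/-- Degree of a left vertex. -/
def degL {n : ℕ} (E : Finset (Fin n × Fin n)) (u : Fin n) : ℕ :=
  (E.filter fun p => p.1 = u).card

/-- Degree of a right vertex. -/
def degR {n : ℕ} (E : Finset (Fin n × Fin n)) (v : Fin n) : ℕ :=
  (E.filter fun p => p.2 = v).card

lemma Finset.mem_image_swap {α β : Type*} [DecidableEq (β × α)] {E : Finset (α × β)}
    {p : β × α} : p ∈ E.image Prod.swap ↔ p.swap ∈ E := by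
  simp [Prod.swap_eq_iff_eq_swap]

lemma tsub_card_mul_add_card_mul_le_card {α β : Type*} [Fintype β] [DecidableEq β]
    (E : Finset α) (f : α → β) (X : Finset β) {k m : ℕ}
    (hk : ∀ b ∉ X, #{x ∈ E | f x = b} = k) (hm : ∀ b ∈ X, m ≤ #{x ∈ E | f x = b}) :
    (Fintype.card β - #X) * k + #X * m ≤ #E := by
  rw [card_eq_sum_card_fiberwise (t := univ) (fun x _ => mem_univ (f x)),
    ← sum_add_sum_compl X, add_comm, ← card_compl,
    sum_const_nat fun b hb => hk b (mem_compl.1 hb)]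
  gcongr
  simpa [mul_comm] using card_nsmul_le_sum X _ m hm

lemma Nat.mul_tsub_le_sq_div_four (a k : ℕ) : a * (k - a) ≤ k ^ 2 / 4 := by
  rw [Nat.le_div_iff_mul_le four_pos]
  rcases le_total a k with hak | hka
  · calc a * (k - a) * 4 = 4 * a * (k - a) := by ring
      _ ≤ (a + (k - a)) ^ 2 := four_mul_le_sq_add a (k - a)
      _ = k ^ 2 := by rw [Nat.add_sub_cancel' hak]
  · simp [Nat.sub_eq_zero_of_le hka]

lemma mul_le_tsub_mul_add_mul_add {n k a b : ℕ} (han : a ≤ n) (hab : a ≤ b) :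
    k * n ≤ (n - a) * k + a * b + k ^ 2 / 4 := by
  have hsq := Nat.mul_tsub_le_sq_div_four a k
  have hab' := Nat.mul_le_mul_left a hab
  obtain ⟨m, rfl⟩ := Nat.exists_eq_add_of_le han
  rw [Nat.add_sub_cancel_left]
  rcases le_total a k with hak | hka
  · obtain ⟨c, rfl⟩ := Nat.exists_eq_add_of_le hak
    rw [Nat.add_sub_cancel_left] at hsq
    nlinarith
  · nlinarith [Nat.mul_le_mul_left a (hka.trans hab)]

section

variable {n : ℕ}

lemma degL_eq_card_filter_mem (E : Finset (Fin n × Fin n)) (u : Fin n) :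
    degL E u = #{v | (u, v) ∈ E} := by
  refine card_nbij' Prod.snd (fun v => (u, v)) ?_ ?_ ?_ ?_ <;> intro p <;> aesop

lemma containsK_image_swap {E : Finset (Fin n × Fin n)} {a b : ℕ} :
    containsK (E.image Prod.swap) a b ↔ containsK E b a := by
  simp only [containsK, mem_image_swap, Prod.swap_prod_mk]
  constructor <;>
  · rintro ⟨S, T, hS, hT, h⟩
    exact ⟨T, S, hT, hS, fun v hv u hu => h u hu v hv⟩

lemma degL_image_swap (E : Finset (Fin n × Fin n)) (v : Fin n) :
    degL (E.image Prod.swap) v = degR E v := by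
  rw [degL, degR, filter_image, card_image_of_injective _ Prod.swap_injective]
  rfl

lemma degR_eq_card_filter_mem (E : Finset (Fin n × Fin n)) (v : Fin n) :
    degR E v = #{u | (u, v) ∈ E} := by
  simp [← degL_image_swap, degL_eq_card_filter_mem]

lemma containsK_one_left_iff {E : Finset (Fin n × Fin n)} {t : ℕ} :
    containsK E 1 t ↔ ∃ u, t ≤ degL E u := by
  simp only [degL_eq_card_filter_mem]
  constructor
  · rintro ⟨S, T, hS, rfl, h⟩
    obtain ⟨u, rfl⟩ := card_eq_one.1 hS
    exact ⟨u, card_le_card fun v hv => by simpa using h u (mem_singleton_self u) v hv⟩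
  · rintro ⟨u, hu⟩
    obtain ⟨T, hT, rfl⟩ := exists_subset_card_eq hu
    refine ⟨{u}, T, card_singleton u, rfl, ?_⟩
    simpa using fun v hv => (mem_filter.1 (hT hv)).2

lemma containsK_one_right_iff {E : Finset (Fin n × Fin n)} {t : ℕ} :
    containsK E t 1 ↔ ∃ v, t ≤ degR E v := by
  simp only [← containsK_image_swap (E := E), containsK_one_left_iff, degL_image_swap]

lemma degL_insert_le (E : Finset (Fin n × Fin n)) (p : Fin n × Fin n) (u : Fin n) :
    degL (insert p E) u ≤ degL E u + 1 := by
  rw [degL, degL, filter_insert]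
  split_ifs
  exacts [card_insert_le _ _, Nat.le_succ _]

lemma degL_insert_of_ne (E : Finset (Fin n × Fin n)) {p : Fin n × Fin n} {u : Fin n}
    (h : p.1 ≠ u) : degL (insert p E) u = degL E u := by
  rw [degL, degL, filter_insert, if_neg h]

lemma degL_add_one_eq_of_containsK_insert {E : Finset (Fin n × Fin n)} {t : ℕ} {u v : Fin n}
    (hlt : ∀ w, degL E w < t) (h : containsK (insert (u, v) E) 1 t) : degL E u + 1 = t := by
  obtain ⟨w, hw⟩ := containsK_one_left_iff.1 h
  obtain rfl | hwu := eq_or_ne u w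
  · have := degL_insert_le E (u, v) u
    have := hlt u
    omega
  · have := hlt w
    rw [degL_insert_of_ne E hwu] at hw
    omega

namespace Saturated

variable {E : Finset (Fin n × Fin n)} {t : ℕ}

lemma degL_lt (h : Saturated 1 t E) (u : Fin n) : degL E u < t :=
  not_le.1 fun hu => h.1 (.inl (containsK_one_left_iff.2 ⟨u, hu⟩))

lemma degR_lt (h : Saturated 1 t E) (v : Fin n) : degR E v < t :=
  not_le.1 fun hv => h.1 (.inr (containsK_one_right_iff.2 ⟨v, hv⟩))

lemma degL_or_degR_add_one_eq (h : Saturated 1 t E) {u v : Fin n} (huv : (u, v) ∉ E) :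
    degL E u + 1 = t ∨ degR E v + 1 = t := by
  rcases h.2 u v huv with hK | hK
  · exact .inl (degL_add_one_eq_of_containsK_insert h.degL_lt hK)
  · rw [← containsK_image_swap, image_insert, Prod.swap_prod_mk] at hK
    right
    simpa only [degL_image_swap] using
      degL_add_one_eq_of_containsK_insert (by simpa only [degL_image_swap] using h.degR_lt) hK

end Saturated

end

theorem stmt7_general (n t : ℕ)
    (E : Finset (Fin n × Fin n)) (hsat : Saturated 1 t E) :
    ((t - 1 : ℕ) : ℤ) * n - (((t - 1) ^ 2 / 4 : ℕ) : ℤ) ≤ (E.card : ℤ) := by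
  set k := t - 1
  set X : Finset (Fin n) := {u | degL E u ≠ k}
  set Y : Finset (Fin n) := {v | degR E v ≠ k}
  have hXY : ∀ u ∈ X, ∀ v ∈ Y, (u, v) ∈ E := fun u hu v hv => by
    by_contra huv
    have := hsat.degL_or_degR_add_one_eq huv
    simp only [X, Y, mem_filter, mem_univ, true_and] at hu hv
    omega
  have hE₁ : (n - #X) * k + #X * #Y ≤ #E := by
    simpa using tsub_card_mul_add_card_mul_le_card E Prod.fst X
      (fun u hu => not_not.1 fun h => hu (mem_filter.2 ⟨mem_univ u, h⟩)) fun u hu => by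
        rw [← degL, degL_eq_card_filter_mem]
        exact card_le_card fun v hv => by simpa using hXY u hu v hv
  have hE₂ : (n - #Y) * k + #Y * #X ≤ #E := by
    simpa using tsub_card_mul_add_card_mul_le_card E Prod.snd Y
      (fun v hv => not_not.1 fun h => hv (mem_filter.2 ⟨mem_univ v, h⟩)) fun v hv => by
        rw [← degR, degR_eq_card_filter_mem]
        exact card_le_card fun u hu => by simpa using hXY u hu v hv
  suffices k * n ≤ #E + k ^ 2 / 4 by rw [sub_le_iff_le_add]; exact_mod_cast this
  rcases le_total #X #Y with h | h
  · exact (mul_le_tsub_mul_add_mul_add (by simpa using card_le_univ X) h).trans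
      (Nat.add_le_add_right hE₁ _)
  · exact (mul_le_tsub_mul_add_mul_add (by simpa using card_le_univ Y) h).trans
      (Nat.add_le_add_right hE₂ _)

theorem stmt7 (n t : ℕ) (ht : 1 ≤ t) (htn : t ≤ n)
    (E : Finset (Fin n × Fin n)) (hsat : Saturated 1 t E) :
    ((t - 1 : ℕ) : ℤ) * n - (((t - 1) ^ 2 / 4 : ℕ) : ℤ) ≤ (E.card : ℤ) :=
  stmt7_general n t E hsat
end

section
/- Let G be a K_{s,t}-saturated n-by-n bipartite graph with fewer than (s+t-2)n - (s+t-2)^2 edges and minimum degree at least t-1. Then there exist non-adjacent vertices u₀ ∈ U and u₀' ∈ U', each of degree at most s+t-3. -/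
/-!
Call a vertex *small* if its degree is below `k = s + t - 2`. Every other vertex has degree at
least `k`, so `k (n - #small) ≤ e(G) < k n - k²` on each side, i.e. each side has more than
`k ≥ t - 1` small vertices. If every small vertex of `U` were adjacent to every small vertex
of `U'`, these two sets would contain a `K_{s,t}`.
-/

open Finset

lemma Finset.lt_card_filter_lt_of_sum_lt {α : Type*} [Fintype α] (f : α → ℕ) (k : ℕ)
    (h : (∑ x, f x : ℤ) < k * Fintype.card α - k ^ 2) :
    k < #(univ.filter fun x => f x < k) := by
  have hsplit := card_filter_add_card_filter_not (s := univ) (fun x => f x < k)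
  have hlarge : #(univ.filter fun x => ¬ f x < k) * k ≤ ∑ x, f x :=
    calc #(univ.filter fun x => ¬ f x < k) * k
        ≤ ∑ x ∈ univ.filter (fun x => ¬ f x < k), f x :=
          by simpa using card_nsmul_le_sum _ f k fun x hx => not_lt.mp (mem_filter.mp hx).2
      _ ≤ ∑ x, f x := sum_le_sum_of_subset (filter_subset _ _)
  rw [card_univ] at hsplit
  zify at hsplit hlarge
  nlinarith

lemma card_eq_sum_degL {n : ℕ} (E : Finset (Fin n × Fin n)) : #E = ∑ u, degL E u :=
  card_eq_sum_card_fiberwise fun p _ => mem_univ p.1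

lemma card_eq_sum_degR {n : ℕ} (E : Finset (Fin n × Fin n)) : #E = ∑ v, degR E v :=
  card_eq_sum_card_fiberwise fun p _ => mem_univ p.2

lemma containsK_of_forall_mem {n a b : ℕ} {E : Finset (Fin n × Fin n)} {A B : Finset (Fin n)}
    (ha : a ≤ #A) (hb : b ≤ #B) (hAB : ∀ u ∈ A, ∀ v ∈ B, (u, v) ∈ E) : containsK E a b := by
  obtain ⟨S, hSA, hS⟩ := exists_subset_card_eq ha
  obtain ⟨T, hTB, hT⟩ := exists_subset_card_eq hb
  exact ⟨S, T, hS, hT, fun u hu v hv => hAB u (hSA hu) v (hTB hv)⟩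

theorem stmt10_general (n s t : ℕ) (hs : 1 ≤ s) (hst : s ≤ t)
    (E : Finset (Fin n × Fin n)) (hsat : Saturated s t E)
    (hfew : (E.card : ℤ) < ((s + t - 2 : ℕ) : ℤ) * n - ((s + t - 2 : ℕ) : ℤ) ^ 2) :
    ∃ u₀ v₀ : Fin n, (u₀, v₀) ∉ E ∧
      (degL E u₀ : ℤ) ≤ (s : ℤ) + t - 3 ∧ (degR E v₀ : ℤ) ≤ (s : ℤ) + t - 3 := by
  set k := s + t - 2
  have hA := lt_card_filter_lt_of_sum_lt (degL E) k (by simpa [card_eq_sum_degL] using hfew)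
  have hB := lt_card_filter_lt_of_sum_lt (degR E) k (by simpa [card_eq_sum_degR] using hfew)
  by_contra! hnone
  have hAB : ∀ u ∈ univ.filter (fun u => degL E u < k),
      ∀ v ∈ univ.filter (fun v => degR E v < k), (u, v) ∈ E := by
    intro u hu v hv
    by_contra huv
    simp only [mem_filter, mem_univ, true_and] at hu hv
    have := hnone u v huv (by omega)
    omega
  exact hsat.1 (Or.inl (containsK_of_forall_mem (by omega) (by omega) hAB))

theorem stmt10 (n s t : ℕ) (hs : 1 ≤ s) (hst : s ≤ t) (htn : t ≤ n)
    (E : Finset (Fin n × Fin n)) (hsat : Saturated s t E)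
    (hminL : ∀ u : Fin n, t - 1 ≤ degL E u) (hminR : ∀ v : Fin n, t - 1 ≤ degR E v)
    (hfew : (E.card : ℤ) < ((s + t - 2 : ℕ) : ℤ) * n - ((s + t - 2 : ℕ) : ℤ) ^ 2) :
    ∃ u₀ v₀ : Fin n, (u₀, v₀) ∉ E ∧
      (degL E u₀ : ℤ) ≤ (s : ℤ) + t - 3 ∧ (degR E v₀ : ℤ) ≤ (s : ℤ) + t - 3 :=
  stmt10_general n s t hs hst E hsat hfew
end
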